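/- Let V = (Fin K → ℂ) × (Fin K → ℂ) with the symplectic form ω((x,ξ),(x',ξ')) = Σᵢ ξ'ᵢxᵢ − Σᵢ ξᵢx'ᵢ and the standard Hermitian inner product. Let W ⊆ V be a coisotropic subspace of complex dimension K + p, let L ⊆ V be Lagrangian, and let L' be a subspace with W° ⊆ L' ⊆ W such that {x ∈ W : ω(x,y) = 0 for all y ∈ L'} = L' (so L'/W° is Lagrangian in W/W°). Assume finrank(L ∩ L') ≥ p. Then for every ε > 0 there exists a Lagrangian subspace L₁ ⊆ V such that L₁ ∩ W° = {0}, (L₁ ∩ W) + W° = L', and the orthogonal projections onto L₁ and onto L differ by at most ε in operator norm. (This is the statement that the graph of the rational extension of the symplectic reduction t_W is the closure of the graph of t_W over the set {L : L ∩ W° = 0}.) -/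

import Mathlib

/-!
Induct on `dim (L ∩ W°)`. When it vanishes, `L` itself works: `L ∩ W` then has dimension `p`,
so it equals `L ∩ L'`, and `(L ∩ W) + W°` is a `K`-dimensional subspace of `L'`.
Otherwise replace `L` by its image under a symplectic shear `x ↦ x + c (ω(x,v) w + ω(x,w) v)`
with `ω(v,w) = 0`, chosen so that `dim (L ∩ W°)` drops while `dim (L ∩ L') ≥ p` survives.
For small `c` the shear is close to the identity, and a subspace moved by an operator `g` with
`‖g - 1‖, ‖g⁻¹ - 1‖ ≤ δ` has orthogonal projection within `2δ` of the original one.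
-/

noncomputable section

/-- `V = ℂ^K × (ℂ^K)^*` with its standard Hermitian inner product: `EuclideanSpace` indexed by
`Fin K ⊕ Fin K`, the `Sum.inl` coordinates being `x` and the `Sum.inr` coordinates being `ξ`. -/
abbrev V8 (K : ℕ) := EuclideanSpace ℂ (Fin K ⊕ Fin K)

/-- The canonical symplectic form `ω((x,ξ),(x',ξ')) = Σᵢ ξ'ᵢ xᵢ − Σᵢ ξᵢ x'ᵢ`. -/
def omega8 {K : ℕ} : V8 K →ₗ[ℂ] V8 K →ₗ[ℂ] ℂ :=
  LinearMap.mk₂ ℂ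
    (fun v w => ∑ i, w (Sum.inr i) * v (Sum.inl i) - ∑ i, v (Sum.inr i) * w (Sum.inl i))
    (by
      intro m₁ m₂ n
      simp only [PiLp.add_apply, mul_add, add_mul, Finset.sum_add_distrib]
      ring)
    (by
      intro c m n
      simp only [PiLp.smul_apply, smul_eq_mul, mul_sub, Finset.mul_sum, mul_comm,
        mul_left_comm, mul_assoc])
    (by
      intro m n₁ n₂
      simp only [PiLp.add_apply, mul_add, add_mul, Finset.sum_add_distrib]
      ring)
    (by
      intro m c n
      simp only [PiLp.smul_apply, smul_eq_mul, mul_sub, Finset.mul_sum, mul_comm,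
        mul_left_comm, mul_assoc])

/-- The `ω`-orthogonal of a subspace `U`. -/
def sympOrth {K : ℕ} (U : Submodule ℂ (V8 K)) : Submodule ℂ (V8 K) where
  carrier := {v | ∀ u ∈ U, omega8 v u = 0}
  add_mem' := by
    intro a b ha hb u hu
    simp [map_add, LinearMap.add_apply, ha u hu, hb u hu]
  zero_mem' := by
    intro u hu
    simp
  smul_mem' := by
    intro c a ha u hu
    simp [_root_.map_smul, LinearMap.smul_apply, ha u hu]

/-- The orthogonal projection onto a subspace, as an operator on `V`. -/
def projOp {K : ℕ} (U : Submodule ℂ (V8 K)) : V8 K →L[ℂ] V8 K :=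
  U.subtypeL.comp (Submodule.orthogonalProjection U)

open Module Submodule

section Projection

variable {𝕜 E : Type*} [RCLike 𝕜] [NormedAddCommGroup E] [InnerProductSpace 𝕜 E]
  {U₁ U₂ : Submodule 𝕜 E} [U₁.HasOrthogonalProjection] [U₂.HasOrthogonalProjection]

theorem norm_one_sub_starProjection_mul_starProjection_le {δ : ℝ} (hδ : 0 ≤ δ)
    (h : ∀ x ∈ U₁, ∃ y ∈ U₂, ‖x - y‖ ≤ δ * ‖x‖) :
    ‖(1 - U₂.starProjection) * U₁.starProjection‖ ≤ δ := by
  refine ContinuousLinearMap.opNorm_le_bound _ hδ fun x => ?_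
  obtain ⟨y, hy, hxy⟩ := h _ (U₁.starProjection_apply_mem x)
  rw [← starProjection_orthogonal']
  calc ‖U₂ᗮ.starProjection (U₁.starProjection x)‖
      = ‖U₂ᗮ.starProjection (U₁.starProjection x - y)‖ := by
        rw [map_sub, starProjection_orthogonal_apply_eq_zero hy, sub_zero]
    _ ≤ ‖U₁.starProjection x - y‖ := U₂ᗮ.norm_starProjection_apply_le _
    _ ≤ δ * ‖U₁.starProjection x‖ := hxy
    _ ≤ δ * ‖x‖ := by gcongr; exact U₁.norm_starProjection_apply_le x

theorem norm_starProjection_sub_le [CompleteSpace E] {δ₁ δ₂ : ℝ} (hδ₁ : 0 ≤ δ₁)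
    (hδ₂ : 0 ≤ δ₂)
    (h₁ : ∀ x ∈ U₁, ∃ y ∈ U₂, ‖x - y‖ ≤ δ₁ * ‖x‖)
    (h₂ : ∀ x ∈ U₂, ∃ y ∈ U₁, ‖x - y‖ ≤ δ₂ * ‖x‖) :
    ‖U₁.starProjection - U₂.starProjection‖ ≤ δ₁ + δ₂ := by
  set P₁ := U₁.starProjection
  set P₂ := U₂.starProjection
  have hstar : star ((1 - P₁) * P₂) = P₂ * (1 - P₁) := by
    rw [star_mul, star_sub, star_one, (isSelfAdjoint_starProjection U₁).star_eq,
      (isSelfAdjoint_starProjection U₂).star_eq]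
  calc ‖P₁ - P₂‖ = ‖(1 - P₂) * P₁ - star ((1 - P₁) * P₂)‖ := by
        rw [hstar]; congr 1; noncomm_ring
    _ ≤ ‖(1 - P₂) * P₁‖ + ‖star ((1 - P₁) * P₂)‖ := norm_sub_le _ _
    _ = ‖(1 - P₂) * P₁‖ + ‖(1 - P₁) * P₂‖ := by rw [norm_star ((1 - P₁) * P₂)]
    _ ≤ δ₁ + δ₂ := add_le_add (norm_one_sub_starProjection_mul_starProjection_le hδ₁ h₁)
        (norm_one_sub_starProjection_mul_starProjection_le hδ₂ h₂)

theorem norm_starProjection_map_sub_le [CompleteSpace E] (U : Submodule 𝕜 E)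
    [U.HasOrthogonalProjection]
    (g : E ≃L[𝕜] E) [(U.map (g : E →ₗ[𝕜] E)).HasOrthogonalProjection] {δ : ℝ}
    (hg : ‖(g : E →L[𝕜] E) - 1‖ ≤ δ) (hg' : ‖(g.symm : E →L[𝕜] E) - 1‖ ≤ δ) :
    ‖(U.map (g : E →ₗ[𝕜] E)).starProjection - U.starProjection‖ ≤ 2 * δ := by
  have hδ : 0 ≤ δ := (norm_nonneg _).trans hg
  rw [two_mul]
  refine norm_starProjection_sub_le hδ hδ ?_ ?_
  · rintro _ ⟨x, hx, rfl⟩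
    refine ⟨x, hx, ?_⟩
    calc ‖g x - x‖ = ‖((g.symm : E →L[𝕜] E) - 1) (g x)‖ := by simp [norm_sub_rev]
      _ ≤ δ * ‖g x‖ := ((g.symm : E →L[𝕜] E) - 1).le_of_opNorm_le hg' _
  · intro x hx
    refine ⟨g x, ⟨x, hx, rfl⟩, ?_⟩
    calc ‖x - g x‖ = ‖((g : E →L[𝕜] E) - 1) x‖ := by simp [norm_sub_rev]
      _ ≤ δ * ‖x‖ := ((g : E →L[𝕜] E) - 1).le_of_opNorm_le hg _

end Projection

section Symplectic

variable {K : ℕ}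

lemma omega8_apply (v w : V8 K) : omega8 v w =
    ∑ i, w (Sum.inr i) * v (Sum.inl i) - ∑ i, v (Sum.inr i) * w (Sum.inl i) := rfl

lemma omega8_self (v : V8 K) : omega8 v v = 0 := by
  simp [omega8_apply]

lemma omega8_swap (v w : V8 K) : omega8 w v = -omega8 v w := by
  simp only [omega8_apply]; ring

lemma omega8_isRefl : (omega8 (K := K)).IsRefl := fun v w h => by
  rw [omega8_swap, h, neg_zero]

lemma omega8_nondegenerate : (omega8 (K := K)).Nondegenerate := by
  refine omega8_isRefl.nondegenerate_iff_separatingLeft.mpr fun v hv => ?_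
  ext (i | i)
  · simpa [omega8_apply, PiLp.single_apply] using hv (PiLp.single 2 (Sum.inr i) 1)
  · simpa [omega8_apply, PiLp.single_apply] using hv (PiLp.single 2 (Sum.inl i) 1)

lemma mem_sympOrth_span_singleton {v z : V8 K} : z ∈ sympOrth (ℂ ∙ v) ↔ omega8 z v = 0 :=
  ⟨fun h => h v (mem_span_singleton_self v), fun h u hu => by
    obtain ⟨a, rfl⟩ := mem_span_singleton.mp hu
    rw [map_smul, h, smul_zero]⟩

lemma sympOrth_eq_orthogonal (U : Submodule ℂ (V8 K)) :
    sympOrth U = LinearMap.BilinForm.orthogonal omega8 U := by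
  ext v
  exact ⟨fun hv u hu => omega8_isRefl v u (hv u hu), fun hv u hu => omega8_isRefl u v (hv u hu)⟩

lemma finrank_add_finrank_sympOrth (U : Submodule ℂ (V8 K)) :
    finrank ℂ U + finrank ℂ (sympOrth U) = K + K := by
  have h := LinearMap.BilinForm.finrank_add_finrank_orthogonal omega8_isRefl U
  rwa [LinearMap.BilinForm.orthogonal_top_eq_bot omega8_nondegenerate, inf_bot_eq, finrank_bot,
    add_zero, ← sympOrth_eq_orthogonal, finrank_euclideanSpace, Fintype.card_sum,
    Fintype.card_fin] at h

lemma sympOrth_sympOrth (U : Submodule ℂ (V8 K)) : sympOrth (sympOrth U) = U := by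
  rw [sympOrth_eq_orthogonal, sympOrth_eq_orthogonal]
  exact LinearMap.BilinForm.orthogonal_orthogonal omega8_nondegenerate omega8_isRefl U

lemma sympOrth_le_sympOrth {U U' : Submodule ℂ (V8 K)} (h : U ≤ U') :
    sympOrth U' ≤ sympOrth U := fun _ hv u hu => hv u (h hu)

lemma sympOrth_sup (U U' : Submodule ℂ (V8 K)) :
    sympOrth (U ⊔ U') = sympOrth U ⊓ sympOrth U' := by
  refine le_antisymm (le_inf (sympOrth_le_sympOrth le_sup_left)
    (sympOrth_le_sympOrth le_sup_right)) ?_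
  rintro v ⟨hv, hv'⟩ _ hu
  obtain ⟨x, hx, y, hy, rfl⟩ := mem_sup.mp hu
  rw [map_add, hv x hx, hv' y hy, add_zero]

lemma exists_mem_sympOrth_omega8_eq_one {U : Submodule ℂ (V8 K)} {x : V8 K} (hx : x ∉ U) :
    ∃ v ∈ sympOrth U, omega8 x v = 1 := by
  obtain ⟨v, hv, hxv⟩ : ∃ v ∈ sympOrth U, omega8 x v ≠ 0 := by
    by_contra! h
    exact hx (sympOrth_sympOrth U ▸ fun v hv => h v hv)
  refine ⟨(omega8 x v)⁻¹ • v, smul_mem _ _ hv, ?_⟩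
  rw [map_smul, smul_eq_mul, inv_mul_cancel₀ hxv]

lemma finrank_le_finrank_inf_sympOrth_span_add_one (A : Submodule ℂ (V8 K)) (v : V8 K) :
    finrank ℂ A ≤ finrank ℂ ↥(A ⊓ sympOrth (ℂ ∙ v)) + 1 := by
  have h₁ := finrank_sup_add_finrank_inf_eq A (sympOrth (ℂ ∙ v))
  have h₂ := finrank_add_finrank_sympOrth (ℂ ∙ v)
  have h₃ : finrank ℂ (ℂ ∙ v) ≤ 1 := by simpa using finrank_span_le_card (R := ℂ) {v}
  have h₄ := (A ⊔ sympOrth (ℂ ∙ v)).finrank_le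
  rw [finrank_euclideanSpace, Fintype.card_sum, Fintype.card_fin] at h₄
  omega

end Symplectic

section Reduction

variable {K p : ℕ} {W L L' : Submodule ℂ (V8 K)}

lemma finrank_eq_of_sympOrth_eq_self (hL : sympOrth L = L) : finrank ℂ L = K := by
  have h := finrank_add_finrank_sympOrth L
  rw [hL] at h
  omega

lemma omega8_eq_zero_of_sympOrth_eq_self (hL : sympOrth L = L) {v w : V8 K} (hv : v ∈ L)
    (hw : w ∈ L) : omega8 v w = 0 := by
  rw [← hL] at hv
  exact hv w hw

lemma finrank_sympOrth_add_eq (hW : finrank ℂ W = K + p) : finrank ℂ (sympOrth W) + p = K := by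
  have := finrank_add_finrank_sympOrth W
  omega

lemma sympOrth_eq_self_of_sympOrth_inf_eq (hL'₁ : sympOrth W ≤ L')
    (hL' : sympOrth L' ⊓ W = L') : sympOrth L' = L' := by
  have h : sympOrth L' ≤ W := sympOrth_sympOrth W ▸ sympOrth_le_sympOrth hL'₁
  rwa [inf_eq_left.mpr h] at hL'

lemma finrank_inf_eq_add_finrank_inf_sympOrth (hL : sympOrth L = L)
    (hW : finrank ℂ W = K + p) :
    finrank ℂ ↥(L ⊓ W) = p + finrank ℂ ↥(L ⊓ sympOrth W) := by
  have h : L ⊓ W = sympOrth (L ⊔ sympOrth W) := by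
    rw [sympOrth_sup, hL, sympOrth_sympOrth]
  have := finrank_add_finrank_sympOrth (L ⊔ sympOrth W)
  have := finrank_sup_add_finrank_inf_eq L (sympOrth W)
  have := finrank_sympOrth_add_eq hW
  have := finrank_eq_of_sympOrth_eq_self hL
  rw [h]
  omega

lemma inf_sup_sympOrth_eq_of_inf_sympOrth_eq_bot (hW : finrank ℂ W = K + p)
    (hL : sympOrth L = L) (hL' : sympOrth L' = L') (hL'₁ : sympOrth W ≤ L') (hL'₂ : L' ≤ W)
    (hdim : p ≤ finrank ℂ ↥(L ⊓ L')) (hbot : L ⊓ sympOrth W = ⊥) :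
    (L ⊓ W) ⊔ sympOrth W = L' := by
  have hLW := finrank_inf_eq_add_finrank_inf_sympOrth hL hW
  rw [hbot, finrank_bot, add_zero] at hLW
  have hLL' : L ⊓ L' = L ⊓ W :=
    eq_of_le_of_finrank_le (inf_le_inf_left L hL'₂) (by omega)
  have hle : L ⊓ W ≤ L' := hLL' ▸ inf_le_right
  have hdisj : L ⊓ W ⊓ sympOrth W = ⊥ := by
    rw [inf_assoc, inf_eq_right.mpr (hL'₁.trans hL'₂), hbot]
  have := finrank_sup_add_finrank_inf_eq (L ⊓ W) (sympOrth W)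
  have := finrank_sympOrth_add_eq hW
  have := finrank_eq_of_sympOrth_eq_self hL'
  rw [hdisj, finrank_bot] at *
  exact eq_of_le_of_finrank_le (sup_le hle hL'₁) (by omega)

lemma add_finrank_inf_sympOrth_le_of_le_sup (hW : finrank ℂ W = K + p) (hL : sympOrth L = L)
    (hL' : sympOrth L' = L') (hL'₁ : sympOrth W ≤ L') (hle : L' ≤ L ⊔ sympOrth W) :
    p + finrank ℂ ↥(L ⊓ sympOrth W) ≤ finrank ℂ ↥(L ⊓ L') := by
  have hsup : L ⊔ L' = L ⊔ sympOrth W :=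
    le_antisymm (sup_le le_sup_left hle) (sup_le_sup_left hL'₁ L)
  have := finrank_sup_add_finrank_inf_eq L L'
  have := finrank_sup_add_finrank_inf_eq L (sympOrth W)
  have := finrank_sympOrth_add_eq hW
  have := finrank_eq_of_sympOrth_eq_self hL
  have := finrank_eq_of_sympOrth_eq_self hL'
  rw [hsup] at *
  omega

end Reduction

section Shear

variable {K : ℕ}

/-- The Hamiltonian vector field of the quadratic form `x ↦ ω(x, v) ω(x, w)`; `shear` is its
exponential. -/
def shearGenerator (v w : V8 K) : V8 K →L[ℂ] V8 K :=
  LinearMap.toContinuousLinearMap ((omega8.flip v).smulRight w + (omega8.flip w).smulRight v)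

lemma shearGenerator_apply (v w x : V8 K) :
    shearGenerator v w x = omega8 x v • w + omega8 x w • v := rfl

lemma shearGenerator_shearGenerator {v w : V8 K} (h : omega8 v w = 0) (x : V8 K) :
    shearGenerator v w (shearGenerator v w x) = 0 := by
  have h' : omega8 w v = 0 := by rw [omega8_swap, h, neg_zero]
  simp [shearGenerator_apply, omega8_self, h, h']

def shear (c : ℂ) (v w : V8 K) (h : omega8 v w = 0) : V8 K ≃L[ℂ] V8 K :=
  ContinuousLinearEquiv.equivOfInverse (1 + c • shearGenerator v w) (1 - c • shearGenerator v w)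
    (fun x => by simp [shearGenerator_shearGenerator h])
    (fun x => by simp [shearGenerator_shearGenerator h])

variable {c : ℂ} {v w : V8 K} {h : omega8 v w = 0}

lemma shear_apply (x : V8 K) :
    shear c v w h x = x + c • (omega8 x v • w + omega8 x w • v) := rfl

lemma norm_shear_sub_one_le :
    ‖(shear c v w h : V8 K →L[ℂ] V8 K) - 1‖ ≤ ‖c‖ * ‖shearGenerator v w‖ := by
  have : (shear c v w h : V8 K →L[ℂ] V8 K) - 1 = c • shearGenerator v w := by
    ext x; simp [shear_apply, shearGenerator_apply]
  rw [this, norm_smul]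

lemma norm_shear_symm_sub_one_le :
    ‖((shear c v w h).symm : V8 K →L[ℂ] V8 K) - 1‖ ≤ ‖c‖ * ‖shearGenerator v w‖ := by
  have : ((shear c v w h).symm : V8 K →L[ℂ] V8 K) - 1 = (-c) • shearGenerator v w := by
    ext x; simp [shear, sub_eq_add_neg]
  rw [this, norm_smul, norm_neg]

lemma omega8_shear_shear (x y : V8 K) :
    omega8 (shear c v w h x) (shear c v w h y) = omega8 x y := by
  have h' : omega8 w v = 0 := by rw [omega8_swap, h, neg_zero]
  simp only [shear_apply, map_add, map_smul, LinearMap.add_apply, LinearMap.smul_apply,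
    smul_eq_mul, omega8_self, h, h', omega8_swap y v, omega8_swap y w]
  ring

lemma sympOrth_map_shear_eq_self {L : Submodule ℂ (V8 K)} (hL : sympOrth L = L) :
    sympOrth (L.map (shear c v w h : V8 K →ₗ[ℂ] V8 K)) =
      L.map (shear c v w h : V8 K →ₗ[ℂ] V8 K) := by
  ext z
  have hz : z = shear c v w h ((shear c v w h).symm z) := by simp
  constructor
  · intro hzL
    refine ⟨(shear c v w h).symm z, ?_, hz.symm⟩
    rw [← hL]
    intro x hx
    rw [← omega8_shear_shear (h := h), ← hz]
    exact hzL _ ⟨x, hx, rfl⟩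
  · rintro ⟨y, hy, rfl⟩ _ ⟨x, hx, rfl⟩
    exact (omega8_shear_shear y x).trans (omega8_eq_zero_of_sympOrth_eq_self hL hy hx)

lemma projOp_eq_starProjection (U : Submodule ℂ (V8 K)) : projOp U = U.starProjection := rfl

lemma exists_shear_near (U : Submodule ℂ (V8 K)) (h : omega8 v w = 0) {ε : ℝ} (hε : 0 < ε) :
    ∃ c ≠ 0, ‖projOp (U.map (shear c v w h : V8 K →ₗ[ℂ] V8 K)) - projOp U‖ ≤ ε := by
  set N := ‖shearGenerator v w‖
  have hN : 0 ≤ N := norm_nonneg _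
  set t : ℝ := ε / (2 * (N + 1)) with ht_def
  have ht : 0 < t := by positivity
  refine ⟨t, Complex.ofReal_ne_zero.mpr ht.ne', ?_⟩
  have hnear := norm_starProjection_map_sub_le U (shear t v w h) norm_shear_sub_one_le
    norm_shear_symm_sub_one_le
  rw [Complex.norm_real, Real.norm_of_nonneg ht.le] at hnear
  rw [projOp_eq_starProjection, projOp_eq_starProjection]
  calc _ ≤ 2 * (t * N) := hnear
    _ = ε * (N / (N + 1)) := by rw [ht_def]; field_simp
    _ ≤ ε := mul_le_of_le_one_right hε.le ((div_le_one (by positivity)).mpr (by linarith))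

end Shear

section Step

variable {K p : ℕ} {W L L' : Submodule ℂ (V8 K)} {c : ℂ} {v w : V8 K}

lemma finrank_lt_of_le_inf_sympOrth_span {A B : Submodule ℂ (V8 K)}
    (hle : A ≤ B ⊓ sympOrth (ℂ ∙ v)) {u : V8 K} (hu : u ∈ B) (huv : omega8 u v ≠ 0) :
    finrank ℂ A < finrank ℂ B :=
  finrank_lt_finrank_of_lt <| hle.trans_lt <| inf_lt_left.mpr fun h =>
    huv (mem_sympOrth_span_singleton.mp (h hu))

lemma inf_sympOrth_span_le_map_shear_self (U : Submodule ℂ (V8 K)) :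
    U ⊓ sympOrth (ℂ ∙ v) ≤ U.map (shear c v v (omega8_self v) : V8 K →ₗ[ℂ] V8 K) := by
  rintro x ⟨hx, hxv⟩
  refine ⟨x, hx, ?_⟩
  simp [shear_apply, mem_sympOrth_span_singleton.mp hxv]

lemma map_shear_self_inf_sympOrth_le (hL : sympOrth L = L) (hWco : sympOrth W ≤ W)
    {u : V8 K} (hu : u ∈ L ⊓ sympOrth W) (huv : omega8 u v = 1) (hc : c ≠ 0) :
    L.map (shear c v v (omega8_self v) : V8 K →ₗ[ℂ] V8 K) ⊓ sympOrth W ≤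
      L ⊓ sympOrth W ⊓ sympOrth (ℂ ∙ v) := by
  rintro _ ⟨⟨x, hx, rfl⟩, hz⟩
  have hpair : omega8 u (shear c v v (omega8_self v) x) = 0 := hu.2 _ (hWco hz)
  have hxv : omega8 x v = 0 := by
    simp only [shear_apply, map_add, map_smul, smul_eq_mul,
      omega8_eq_zero_of_sympOrth_eq_self hL hu.1 hx, huv] at hpair
    simpa [hc] using hpair
  have hfix : shear c v v (omega8_self v) x = x := by simp [shear_apply, hxv]
  change shear c v v (omega8_self v) x ∈ sympOrth W at hz
  change shear c v v (omega8_self v) x ∈ _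
  rw [hfix] at hz ⊢
  exact ⟨⟨hx, hz⟩, mem_sympOrth_span_singleton.mpr hxv⟩

lemma map_inf_le_map_shear_inf (hL' : sympOrth L' = L') (hw : w ∈ L') (h : omega8 v w = 0) :
    (L ⊓ L').map (shear c v w h : V8 K →ₗ[ℂ] V8 K) ≤
      L.map (shear c v w h : V8 K →ₗ[ℂ] V8 K) ⊓ L' := by
  rintro _ ⟨x, ⟨hxL, hxL'⟩, rfl⟩
  refine ⟨⟨x, hxL, rfl⟩, ?_⟩
  have hxw : omega8 x w = 0 := omega8_eq_zero_of_sympOrth_eq_self hL' hxL' hw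
  simpa [shear_apply, hxw] using add_mem hxL' (smul_mem L' c (smul_mem L' (omega8 x v) hw))

lemma map_shear_inf_sympOrth_le (hw : w ∈ W) (hwL : w ∉ L ⊔ sympOrth W)
    (h : omega8 v w = 0) (hc : c ≠ 0) :
    L.map (shear c v w h : V8 K →ₗ[ℂ] V8 K) ⊓ sympOrth W ≤
      L ⊓ sympOrth W ⊓ sympOrth (ℂ ∙ v) := by
  rintro _ ⟨⟨x, hx, rfl⟩, hz⟩
  change shear c v w h x ∈ sympOrth W at hz
  change shear c v w h x ∈ _
  have hxw : omega8 x w = 0 := by simpa [shear_apply, omega8_self, h] using hz w hw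
  -- otherwise `shear x - x ∈ W° + L` would be a nonzero multiple of `w`
  have hxv : omega8 x v = 0 := by
    by_contra hxv
    refine hwL ?_
    have hsub : shear c v w h x - x = (c * omega8 x v) • w := by
      simp [shear_apply, hxw, smul_smul]
    have hcx : c * omega8 x v ≠ 0 := mul_ne_zero hc hxv
    rw [← inv_smul_smul₀ hcx w, ← hsub]
    exact smul_mem _ _ (sub_mem (mem_sup_right hz) (mem_sup_left hx))
  have hfix : shear c v w h x = x := by simp [shear_apply, hxv, hxw]
  rw [hfix] at hz ⊢
  exact ⟨⟨hx, hz⟩, mem_sympOrth_span_singleton.mpr hxv⟩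

end Step

/-- Shearing `L` along a vector `v` with `ω(u, v) = 1` for some `0 ≠ u ∈ L ∩ W°` removes `u`
from `L ∩ W°`. A transvection (`w = v`) does this when `L' ⊆ L + W°`, since then
`dim (L ∩ L') > p` can afford to lose one dimension; otherwise a shear along some
`w ∈ L' \ (L + W°)` keeps all of `L ∩ L'` inside `L'`. -/
theorem exists_lagrangian_near_finrank_inf_sympOrth_lt {K p : ℕ} {W L L' : Submodule ℂ (V8 K)}
    (hWco : sympOrth W ≤ W) (hW : finrank ℂ W = K + p) (hL : sympOrth L = L)
    (hL' : sympOrth L' = L') (hL'₁ : sympOrth W ≤ L') (hL'₂ : L' ≤ W)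
    (hdim : p ≤ finrank ℂ ↥(L ⊓ L')) (hne : L ⊓ sympOrth W ≠ ⊥) {ε : ℝ} (hε : 0 < ε) :
    ∃ L₁ : Submodule ℂ (V8 K), sympOrth L₁ = L₁ ∧ p ≤ finrank ℂ ↥(L₁ ⊓ L') ∧
      finrank ℂ ↥(L₁ ⊓ sympOrth W) < finrank ℂ ↥(L ⊓ sympOrth W) ∧
      ‖projOp L₁ - projOp L‖ ≤ ε := by
  obtain ⟨u, hu, hu0⟩ := exists_mem_ne_zero_of_ne_bot hne
  by_cases hsup : L' ≤ L ⊔ sympOrth W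
  · obtain ⟨v, -, huv⟩ := exists_mem_sympOrth_omega8_eq_one (U := ⊥) (by simpa using hu0)
    obtain ⟨c, hc, hnear⟩ := exists_shear_near L (omega8_self v) hε
    refine ⟨_, sympOrth_map_shear_eq_self hL, ?_,
      finrank_lt_of_le_inf_sympOrth_span (map_shear_self_inf_sympOrth_le hL hWco hu huv hc) hu
        (by simp [huv]), hnear⟩
    have hpos : finrank ℂ ↥(L ⊓ sympOrth W) ≠ 0 := fun h => hne (finrank_eq_zero.mp h)
    have hlarge := add_finrank_inf_sympOrth_le_of_le_sup hW hL hL' hL'₁ hsup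
    have hdrop := finrank_le_finrank_inf_sympOrth_span_add_one (L ⊓ L') v
    have hfix : L ⊓ L' ⊓ sympOrth (ℂ ∙ v) ≤
        L.map (shear c v v (omega8_self v) : V8 K →ₗ[ℂ] V8 K) ⊓ L' :=
      le_inf ((inf_le_inf_right _ inf_le_left).trans (inf_sympOrth_span_le_map_shear_self L))
        (inf_le_left.trans inf_le_right)
    have := finrank_mono hfix
    omega
  · obtain ⟨w, hw, hwL⟩ := SetLike.not_le_iff_exists.mp hsup
    have hu_w : u ∉ ℂ ∙ w := by
      rintro hu_w
      obtain ⟨a, rfl⟩ := mem_span_singleton.mp hu_w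
      have ha : a ≠ 0 := by rintro rfl; exact hu0 (zero_smul ℂ w)
      exact hwL (mem_sup_right (by simpa [ha] using smul_mem _ a⁻¹ hu.2))
    obtain ⟨v, hvw, huv⟩ := exists_mem_sympOrth_omega8_eq_one hu_w
    have h := mem_sympOrth_span_singleton.mp hvw
    obtain ⟨c, hc, hnear⟩ := exists_shear_near L h hε
    refine ⟨_, sympOrth_map_shear_eq_self hL, ?_,
      finrank_lt_of_le_inf_sympOrth_span (map_shear_inf_sympOrth_le (hL'₂ hw) hwL h hc) hu
        (by simp [huv]), hnear⟩
    calc p ≤ finrank ℂ ↥(L ⊓ L') := hdim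
      _ = finrank ℂ ↥((L ⊓ L').map (shear c v w h : V8 K →ₗ[ℂ] V8 K)) :=
        ((shear c v w h).toLinearEquiv.finrank_map_eq _).symm
      _ ≤ _ := finrank_mono (map_inf_le_map_shear_inf hL' hw h)

/-- The closure-of-graph statement for the rational extension of the symplectic reduction:
if `W` is coisotropic of dimension `K + p`, `L` Lagrangian, `L'` with `W° ⊆ L' ⊆ W` and
`L'/W°` Lagrangian in `W/W°`, and `dim (L ∩ L') ≥ p`, then arbitrarily close to `L` (in the
operator-norm distance of orthogonal projections) there is a Lagrangian `L₁` with
`L₁ ∩ W° = 0` and `t_W(L₁) = L'/W°`, i.e. `(L₁ ∩ W) + W° = L'`. -/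
theorem statement_8 {K p : ℕ} (W L L' : Submodule ℂ (V8 K))
    (hWco : sympOrth W ≤ W)
    (hWdim : Module.finrank ℂ ↥W = K + p)
    (hLlag : sympOrth L = L)
    (hL'1 : sympOrth W ≤ L') (hL'2 : L' ≤ W)
    (hL'lag : sympOrth L' ⊓ W = L')
    (hdim : p ≤ Module.finrank ℂ ↥(L ⊓ L'))
    (ε : ℝ) (hε : 0 < ε) :
    ∃ L₁ : Submodule ℂ (V8 K),
      sympOrth L₁ = L₁ ∧
      L₁ ⊓ sympOrth W = ⊥ ∧
      (L₁ ⊓ W) ⊔ sympOrth W = L' ∧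
      ‖projOp L₁ - projOp L‖ ≤ ε := by
  have hL' := sympOrth_eq_self_of_sympOrth_inf_eq hL'1 hL'lag
  induction hn : Module.finrank ℂ ↥(L ⊓ sympOrth W) using Nat.strong_induction_on
    generalizing L ε with
  | _ n ih =>
  by_cases hbot : L ⊓ sympOrth W = ⊥
  · refine ⟨L, hLlag, hbot, ?_, by simpa using hε.le⟩
    exact inf_sup_sympOrth_eq_of_inf_sympOrth_eq_bot hWdim hLlag hL' hL'1 hL'2 hdim hbot
  obtain ⟨L₀, hL₀, hdim₀, hlt, hnear₀⟩ := exists_lagrangian_near_finrank_inf_sympOrth_lt hWco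
    hWdim hLlag hL' hL'1 hL'2 hdim hbot (half_pos hε)
  obtain ⟨L₁, hL₁, hbot₁, hred₁, hnear₁⟩ := ih _ (hn ▸ hlt) L₀ hL₀ hdim₀ _ (half_pos hε) rfl
  refine ⟨L₁, hL₁, hbot₁, hred₁, ?_⟩
  calc ‖projOp L₁ - projOp L‖ = ‖(projOp L₁ - projOp L₀) + (projOp L₀ - projOp L)‖ := by
        rw [sub_add_sub_cancel]
    _ ≤ ε / 2 + ε / 2 := (norm_add_le _ _).trans (add_le_add hnear₁ hnear₀)
    _ = ε := add_halves ε
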